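/- In the single-succedent intuitionistic sequent calculus LJ extended by the rule KUT (from ¬A, Γ ⊢ (empty) and A, Π ⊢ Λ infer Γ, Π ⊢ Λ, with Λ containing at most one formula), the sequent ⊢ A ∨ ¬A is derivable. -/

import Mathlib

inductive Fml : Type
  | atom (p : ℕ)
  | neg (A : Fml)
  | and (A B : Fml)
  | or (A B : Fml)
  | imp (A B : Fml)
deriving DecidableEq

/-- The intuitionistic single-succedent sequent calculus LJ extended with
the classical rule KUT. Sequents are Γ ⊢ Δ with Δ an optional formula. -/
inductive LJKut : Multiset Fml → Option Fml → Prop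
  | init (A : Fml) : LJKut {A} (some A)
  | wl {Γ Δ} (A : Fml) : LJKut Γ Δ → LJKut (A ::ₘ Γ) Δ
  | wr {Γ} (A : Fml) : LJKut Γ none → LJKut Γ (some A)
  | cl {Γ Δ} {A : Fml} : LJKut (A ::ₘ A ::ₘ Γ) Δ → LJKut (A ::ₘ Γ) Δ
  | cut {Γ Θ Λ} {A : Fml} :
      LJKut Γ (some A) → LJKut (A ::ₘ Θ) Λ → LJKut (Γ + Θ) Λ
  | negL {Γ} {A : Fml} : LJKut Γ (some A) → LJKut (Fml.neg A ::ₘ Γ) none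
  | negR {Γ} {A : Fml} : LJKut (A ::ₘ Γ) none → LJKut Γ (some (Fml.neg A))
  | andL {Γ Δ} {A B : Fml} :
      LJKut (A ::ₘ B ::ₘ Γ) Δ → LJKut (Fml.and A B ::ₘ Γ) Δ
  | andR {Γ} {A B : Fml} :
      LJKut Γ (some A) → LJKut Γ (some B) → LJKut Γ (some (Fml.and A B))
  | orL {Γ Δ} {A B : Fml} :
      LJKut (A ::ₘ Γ) Δ → LJKut (B ::ₘ Γ) Δ → LJKut (Fml.or A B ::ₘ Γ) Δ
  | orR1 {Γ} {A B : Fml} : LJKut Γ (some A) → LJKut Γ (some (Fml.or A B))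
  | orR2 {Γ} {A B : Fml} : LJKut Γ (some B) → LJKut Γ (some (Fml.or A B))
  | impL {Γ Δ} {A B : Fml} :
      LJKut Γ (some A) → LJKut (B ::ₘ Γ) Δ → LJKut (Fml.imp A B ::ₘ Γ) Δ
  | impR {Γ} {A B : Fml} :
      LJKut (A ::ₘ Γ) (some B) → LJKut Γ (some (Fml.imp A B))
  | kut {Γ Θ Λ} {A : Fml} :
      LJKut (Fml.neg A ::ₘ Γ) none → LJKut (A ::ₘ Θ) Λ → LJKut (Γ + Θ) Λ

/-! The sequent `¬(A ∨ ¬A) ⊢` is already derivable in LJ: from `A` one gets `A ∨ ¬A`, contradicting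
the hypothesis, so `¬A` follows and again yields `A ∨ ¬A`. KUT against the axiom `A ∨ ¬A ⊢ A ∨ ¬A`
then discharges the negated hypothesis. -/

namespace LJKut

theorem of_neg_cons_none {Γ : Multiset Fml} {B : Fml} (h : LJKut (Fml.neg B ::ₘ Γ) none) :
    LJKut Γ (some B) := by
  simpa using kut h (init B)

theorem neg_or_neg_self_none (A : Fml) :
    LJKut {Fml.neg (Fml.or A (Fml.neg A))} none := by
  have hA : LJKut (Fml.neg (Fml.or A (Fml.neg A)) ::ₘ {A}) none := negL (orR1 (init A))
  have hNegA : LJKut {Fml.neg (Fml.or A (Fml.neg A))} (some (Fml.neg A)) :=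
    negR (Multiset.cons_swap _ _ _ ▸ hA)
  exact cl (negL (orR2 hNegA))

end LJKut

/-- Excluded middle is derivable in LJ + KUT. -/
theorem excluded_middle_in_LJ_kut (A : Fml) :
    LJKut 0 (some (Fml.or A (Fml.neg A))) :=
  LJKut.of_neg_cons_none (LJKut.neg_or_neg_self_none A)
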